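/- arXiv:2410.20982 — 2 statements merged into one kernel-verified Lean document; each statement's English description precedes it below -/
import Mathlib

section
/- Fix q∈(0,1), μ̃>0, σ>0. The function Ω(s) = (1-q)(σ² + 2μ̃s) - q e^{2μ̃s/σ²}(2μ̃s - σ²) satisfies: Ω(0) = σ² > 0, Ω(s) → -∞ as s → -∞, and Ω is strictly increasing in s on (-∞,0]. Hence there is a unique s⁻ < 0 with Ω(s⁻) = 0. -/
open Filter

theorem stmt_8 (q μt σ : ℝ) (hq0 : 0 < q) (hq1 : q < 1) (hμt : 0 < μt) (hσ : 0 < σ)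
    (Ω : ℝ → ℝ)
    (hΩ : ∀ s, Ω s = (1 - q) * (σ ^ 2 + 2 * μt * s) -
        q * Real.exp (2 * μt * s / σ ^ 2) * (2 * μt * s - σ ^ 2)) :
    Ω 0 = σ ^ 2 ∧ 0 < σ ^ 2 ∧
    Tendsto Ω atBot atBot ∧
    StrictMonoOn Ω (Set.Iic 0) ∧
    ∃! s : ℝ, s < 0 ∧ Ω s = 0 := by
  have hΩ' : Ω = fun s => (1 - q) * (σ ^ 2 + 2 * μt * s) -
      q * Real.exp (2 * μt * s / σ ^ 2) * (2 * μt * s - σ ^ 2) := funext hΩ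
  subst hΩ'
  have hσ2 : (0:ℝ) < σ ^ 2 := by positivity
  have hσ2' : σ ^ 2 ≠ 0 := ne_of_gt hσ2
  have h0 : ((fun s => (1 - q) * (σ ^ 2 + 2 * μt * s) -
      q * Real.exp (2 * μt * s / σ ^ 2) * (2 * μt * s - σ ^ 2)) 0) = σ ^ 2 := by
    simp [Real.exp_zero]; ring
  -- derivative
  have hd : ∀ s : ℝ, HasDerivAt (fun s => (1 - q) * (σ ^ 2 + 2 * μt * s) -
      q * Real.exp (2 * μt * s / σ ^ 2) * (2 * μt * s - σ ^ 2))
      ((1 - q) * (2 * μt) -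
        q * (Real.exp (2 * μt * s / σ ^ 2) * ((2 * μt / σ ^ 2) * (2 * μt * s - σ ^ 2)
          + 2 * μt))) s := by
    intro s
    have harg : HasDerivAt (fun s : ℝ => 2 * μt * s / σ ^ 2) (2 * μt / σ ^ 2) s := by
      simpa using ((hasDerivAt_id s).const_mul (2 * μt)).div_const (σ ^ 2)
    have hexp := harg.exp
    have hlin : HasDerivAt (fun s : ℝ => 2 * μt * s - σ ^ 2) (2 * μt) s := by
      simpa using ((hasDerivAt_id s).const_mul (2 * μt)).sub_const (σ ^ 2)
    have hmul := hexp.mul hlin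
    have h1 : HasDerivAt (fun s : ℝ => (1 - q) * (σ ^ 2 + 2 * μt * s)) ((1 - q) * (2 * μt)) s := by
      simpa using (((hasDerivAt_id s).const_mul (2 * μt)).const_add (σ ^ 2)).const_mul (1 - q)
    have := h1.sub (hmul.const_mul q)
    have heq : (fun x => (1 - q) * (σ ^ 2 + 2 * μt * x) -
        q * (Real.exp (2 * μt * x / σ ^ 2) * (2 * μt * x - σ ^ 2)))
        = (fun x => (1 - q) * (σ ^ 2 + 2 * μt * x) -
          q * Real.exp (2 * μt * x / σ ^ 2) * (2 * μt * x - σ ^ 2)) := by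
      funext x; ring
    replace this : HasDerivAt (fun x => (1 - q) * (σ ^ 2 + 2 * μt * x) -
        q * (Real.exp (2 * μt * x / σ ^ 2) * (2 * μt * x - σ ^ 2))) _ s := this
    rw [heq] at this
    convert this using 1
    ring
  -- positivity of derivative on s < 0
  have hdpos : ∀ s : ℝ, s < 0 → 0 < (1 - q) * (2 * μt) -
      q * (Real.exp (2 * μt * s / σ ^ 2) * ((2 * μt / σ ^ 2) * (2 * μt * s - σ ^ 2)
        + 2 * μt)) := by
    intro s hs
    have hkey : (2 * μt / σ ^ 2) * (2 * μt * s - σ ^ 2) + 2 * μt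
        = (2 * μt / σ ^ 2) * (2 * μt * s) := by
      field_simp; ring
    rw [hkey]
    have hexp : 0 < Real.exp (2 * μt * s / σ ^ 2) := Real.exp_pos _
    have h2 : Real.exp (2 * μt * s / σ ^ 2) * ((2 * μt / σ ^ 2) * (2 * μt * s)) ≤ 0 := by
      apply mul_nonpos_of_nonneg_of_nonpos hexp.le
      apply mul_nonpos_of_nonneg_of_nonpos (by positivity)
      nlinarith
    nlinarith
  have hcont : Continuous (fun s => (1 - q) * (σ ^ 2 + 2 * μt * s) -
      q * Real.exp (2 * μt * s / σ ^ 2) * (2 * μt * s - σ ^ 2)) := by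
    fun_prop
  -- strict mono
  have hmono : StrictMonoOn (fun s => (1 - q) * (σ ^ 2 + 2 * μt * s) -
      q * Real.exp (2 * μt * s / σ ^ 2) * (2 * μt * s - σ ^ 2)) (Set.Iic 0) := by
    apply StrictMonoOn.mono (s := Set.Iic (0:ℝ)) ?_ le_rfl
    apply strictMonoOn_of_deriv_pos (convex_Iic 0) hcont.continuousOn
    intro x hx
    rw [interior_Iic] at hx
    rw [(hd x).deriv]
    exact hdpos x hx
  -- tendsto atBot
  have htend : Tendsto (fun s => (1 - q) * (σ ^ 2 + 2 * μt * s) -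
      q * Real.exp (2 * μt * s / σ ^ 2) * (2 * μt * s - σ ^ 2)) atBot atBot := by
    have hc : (0:ℝ) < 2 * μt / σ ^ 2 := by positivity
    have hargbot : Tendsto (fun s : ℝ => 2 * μt * s / σ ^ 2) atBot atBot := by
      have h := (tendsto_const_mul_atBot_of_pos (l := atBot) (f := fun s : ℝ => s) hc).mpr
        tendsto_id
      exact h.congr fun x => by ring
    -- x * exp x → 0 at atBot
    have hxex : Tendsto (fun x : ℝ => x * Real.exp x) atBot (nhds 0) := by
      have h := (Real.tendsto_pow_mul_exp_neg_atTop_nhds_zero 1).comp tendsto_neg_atBot_atTop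
      have h2 := h.neg
      rw [neg_zero] at h2
      exact h2.congr fun x => by simp [Function.comp]
    -- second piece tends to 0
    have hB : Tendsto (fun s : ℝ => -(q * Real.exp (2 * μt * s / σ ^ 2) * (2 * μt * s - σ ^ 2)))
        atBot (nhds 0) := by
      have h1 : Tendsto (fun s : ℝ => (2 * μt * s / σ ^ 2) * Real.exp (2 * μt * s / σ ^ 2))
          atBot (nhds 0) := hxex.comp hargbot
      have h2 : Tendsto (fun s : ℝ => Real.exp (2 * μt * s / σ ^ 2)) atBot (nhds 0) :=
        Real.tendsto_exp_atBot.comp hargbot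
      have h3 : Tendsto (fun s : ℝ =>
          -(q * (σ ^ 2 * ((2 * μt * s / σ ^ 2) * Real.exp (2 * μt * s / σ ^ 2))
            - σ ^ 2 * Real.exp (2 * μt * s / σ ^ 2)))) atBot (nhds 0) := by
        have := (((h1.const_mul (σ ^ 2)).sub (h2.const_mul (σ ^ 2))).const_mul q).neg
        simpa using this
      refine h3.congr (fun s => ?_)
      field_simp
    have hA : Tendsto (fun s : ℝ => (1 - q) * (σ ^ 2 + 2 * μt * s)) atBot atBot := by
      have hlin : Tendsto (fun s : ℝ => σ ^ 2 + 2 * μt * s) atBot atBot := by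
        apply tendsto_atBot_add_const_left
        exact (tendsto_const_mul_atBot_of_pos (by positivity)).mpr tendsto_id
      exact (tendsto_const_mul_atBot_of_pos (by linarith)).mpr hlin
    have := hA.atBot_add hB
    refine this.congr (fun s => ?_)
    ring
  refine ⟨h0, hσ2, htend, hmono, ?_⟩
  -- unique root
  obtain ⟨a, ha⟩ := ((htend.eventually (eventually_lt_atBot 0)).and
    (eventually_le_atBot (-1 : ℝ))).exists
  have ha0 : a < 0 := lt_of_le_of_lt ha.2 (by norm_num)
  have hiv := intermediate_value_Ioo (le_of_lt ha0) (hcont.continuousOn (s := Set.Icc a 0))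
  have hmem : (0:ℝ) ∈ Set.Ioo ((fun s => (1 - q) * (σ ^ 2 + 2 * μt * s) -
      q * Real.exp (2 * μt * s / σ ^ 2) * (2 * μt * s - σ ^ 2)) a)
      ((fun s => (1 - q) * (σ ^ 2 + 2 * μt * s) -
      q * Real.exp (2 * μt * s / σ ^ 2) * (2 * μt * s - σ ^ 2)) 0) := by
    constructor
    · exact ha.1
    · rw [h0]; exact hσ2
  obtain ⟨s, hsmem, hs0⟩ := hiv hmem
  refine ⟨s, ⟨hsmem.2, hs0⟩, ?_⟩
  intro t ht
  have hinj := hmono.injOn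
  exact hinj (Set.mem_Iic.2 ht.1.le) (Set.mem_Iic.2 hsmem.2.le) (ht.2.trans hs0.symm)
end

section
/- Fix q∈(0,1), μ>0, μ̃>0, σ>0, β>0, Δ>0, κ∈[0,1] with β+Δ-(β+1)κ ≠ 0. The derivative of AU(s,μ̃) = -κ(π(s,μ̃)Δ + (1-π(s,μ̃))) - (1-κ)π(s,μ̃)(Δ+β), where π(s,μ̃) = q/(q+(1-q)e^{-2μ̃s/σ²}), with respect to μ̃ has sign equal to sign(s) · sign(κ(β+1) - (β+Δ)). In particular, if κ(β+1) < β+Δ, then AU is strictly increasing in μ̃ for s<0 and strictly decreasing in μ̃ for s>0. -/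
theorem stmt_18 (q μ μt σ β Δ κ : ℝ) (hq0 : 0 < q) (hq1 : q < 1) (hμ : 0 < μ)
    (hμt : 0 < μt) (hσ : 0 < σ) (hβ : 0 < β) (hΔ : 0 < Δ) (hκ0 : 0 ≤ κ) (hκ1 : κ ≤ 1)
    (hne : β + Δ - (β + 1) * κ ≠ 0)
    (π : ℝ → ℝ → ℝ)
    (hπ : ∀ s m, π s m = q / (q + (1 - q) * Real.exp (-(2 * m * s) / σ ^ 2)))
    (AU : ℝ → ℝ → ℝ)
    (hAU : ∀ s m, AU s m = -κ * (π s m * Δ + (1 - π s m)) - (1 - κ) * (π s m * (Δ + β))) :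
    (∀ s : ℝ, Real.sign (deriv (fun m => AU s m) μt) =
      Real.sign s * Real.sign (κ * (β + 1) - (β + Δ))) ∧
    (κ * (β + 1) < β + Δ →
      (∀ s : ℝ, s < 0 → StrictMonoOn (fun m => AU s m) (Set.Ioi 0)) ∧
      (∀ s : ℝ, 0 < s → StrictAntiOn (fun m => AU s m) (Set.Ioi 0))) := by
  set c : ℝ := κ * (β + 1) - (β + Δ) with hcdef
  have hc : c ≠ 0 := by
    intro h; apply hne; linarith [h]
  have h1q : 0 < 1 - q := by linarith
  have hσ2 : (0:ℝ) < σ ^ 2 := by positivity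
  have hD : ∀ s m : ℝ, 0 < q + (1 - q) * Real.exp (-(2 * m * s) / σ ^ 2) := fun s m =>
    add_pos hq0 (mul_pos h1q (Real.exp_pos _))
  have hP : ∀ s m : ℝ,
      0 < q * (1 - q) * Real.exp (-(2 * m * s) / σ ^ 2) /
        (q + (1 - q) * Real.exp (-(2 * m * s) / σ ^ 2)) ^ 2 := fun s m => by
    have := hD s m
    positivity
  have hfun : ∀ s : ℝ, (fun m => AU s m) =
      (fun m => c * (q / (q + (1 - q) * Real.exp (-(2 * m * s) / σ ^ 2))) - κ) := by
    intro s; funext m; rw [hAU, hπ]; ring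
  have key : ∀ s m : ℝ, HasDerivAt (fun m => AU s m)
      (c * (2 * s / σ ^ 2) * (q * (1 - q) * Real.exp (-(2 * m * s) / σ ^ 2) /
        (q + (1 - q) * Real.exp (-(2 * m * s) / σ ^ 2)) ^ 2)) m := by
    intro s m
    rw [hfun s]
    have hg : HasDerivAt (fun m : ℝ => -(2 * m * s) / σ ^ 2) (-(2 * s) / σ ^ 2) m := by
      have h1 : HasDerivAt (fun m : ℝ => m * (-(2 * s) / σ ^ 2)) (1 * (-(2 * s) / σ ^ 2)) m :=
        (hasDerivAt_id m).mul_const _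
      have heq : (fun m : ℝ => -(2 * m * s) / σ ^ 2) =
          (fun m : ℝ => m * (-(2 * s) / σ ^ 2)) := by funext x; ring
      rw [heq]; simpa using h1
    have hexp := hg.exp
    have hDd : HasDerivAt (fun m : ℝ => q + (1 - q) * Real.exp (-(2 * m * s) / σ ^ 2))
        ((1 - q) * (Real.exp (-(2 * m * s) / σ ^ 2) * (-(2 * s) / σ ^ 2))) m :=
      (hexp.const_mul (1 - q)).const_add q
    have hπd := (hasDerivAt_const m q).div hDd (ne_of_gt (hD s m))
    have hfin := (hπd.const_mul c).sub_const κ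
    refine hfin.congr_deriv ?_
    have hDne := ne_of_gt (hD s m)
    field_simp
    ring
  constructor
  · intro s
    rw [(key s μt).deriv]
    rcases lt_trichotomy s 0 with hs | hs | hs
    · rcases hc.lt_or_gt with hcneg | hcpos
      · have hpos : 0 < c * (2 * s / σ ^ 2) * (q * (1 - q) * Real.exp (-(2 * μt * s) / σ ^ 2) /
            (q + (1 - q) * Real.exp (-(2 * μt * s) / σ ^ 2)) ^ 2) := by
          apply mul_pos _ (hP s μt)
          apply mul_pos_of_neg_of_neg hcneg
          have : 2 * s < 0 := by linarith
          exact div_neg_of_neg_of_pos this hσ2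
        rw [Real.sign_of_pos hpos, Real.sign_of_neg hs, Real.sign_of_neg hcneg]; ring
      · have hneg : c * (2 * s / σ ^ 2) * (q * (1 - q) * Real.exp (-(2 * μt * s) / σ ^ 2) /
            (q + (1 - q) * Real.exp (-(2 * μt * s) / σ ^ 2)) ^ 2) < 0 := by
          apply mul_neg_of_neg_of_pos _ (hP s μt)
          apply mul_neg_of_pos_of_neg hcpos
          have : 2 * s < 0 := by linarith
          exact div_neg_of_neg_of_pos this hσ2
        rw [Real.sign_of_neg hneg, Real.sign_of_neg hs, Real.sign_of_pos hcpos]; ring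
    · subst hs
      have : c * (2 * 0 / σ ^ 2) * (q * (1 - q) * Real.exp (-(2 * μt * 0) / σ ^ 2) /
          (q + (1 - q) * Real.exp (-(2 * μt * 0) / σ ^ 2)) ^ 2) = 0 := by ring
      rw [this, Real.sign_zero]; simp [Real.sign_zero]
    · rcases hc.lt_or_gt with hcneg | hcpos
      · have hneg : c * (2 * s / σ ^ 2) * (q * (1 - q) * Real.exp (-(2 * μt * s) / σ ^ 2) /
            (q + (1 - q) * Real.exp (-(2 * μt * s) / σ ^ 2)) ^ 2) < 0 := by
          apply mul_neg_of_neg_of_pos _ (hP s μt)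
          apply mul_neg_of_neg_of_pos hcneg
          positivity
        rw [Real.sign_of_neg hneg, Real.sign_of_pos hs, Real.sign_of_neg hcneg]; ring
      · have hpos : 0 < c * (2 * s / σ ^ 2) * (q * (1 - q) * Real.exp (-(2 * μt * s) / σ ^ 2) /
            (q + (1 - q) * Real.exp (-(2 * μt * s) / σ ^ 2)) ^ 2) := by
          apply mul_pos _ (hP s μt)
          apply mul_pos hcpos
          positivity
        rw [Real.sign_of_pos hpos, Real.sign_of_pos hs, Real.sign_of_pos hcpos]; ring
  · intro hlt
    have hcneg : c < 0 := by simp only [hcdef]; linarith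
    constructor
    · intro s hs
      apply strictMonoOn_of_deriv_pos (convex_Ioi 0)
      · exact fun x _ => ((key s x).differentiableAt.continuousAt).continuousWithinAt
      · intro x hx
        rw [(key s x).deriv]
        apply mul_pos _ (hP s x)
        apply mul_pos_of_neg_of_neg hcneg
        have : 2 * s < 0 := by linarith
        exact div_neg_of_neg_of_pos this hσ2
    · intro s hs
      apply strictAntiOn_of_deriv_neg (convex_Ioi 0)
      · exact fun x _ => ((key s x).differentiableAt.continuousAt).continuousWithinAt
      · intro x hx
        rw [(key s x).deriv]
        apply mul_neg_of_neg_of_pos _ (hP s x)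
        apply mul_neg_of_neg_of_pos hcneg
        positivity
end
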